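/- arXiv:1210.8315 — 2 statements merged into one kernel-verified Lean document; each statement's English description precedes it below -/
import Mathlib

section
/- Let (ζ_k)_{k∈ℕ} be i.i.d. real random variables with E(|ζ_1|^ℓ) < ∞ for some ℓ ∈ ℕ and E(ζ_1) = 0. Then there exists a real polynomial R of degree at most ⌊ℓ/2⌋ such that E((ζ_1 + ⋯ + ζ_N)^ℓ) = R(N) for all N ∈ ℕ with N ≥ ℓ. -/
/-!
Write `M_j(N) = E[(ζ_0 + ⋯ + ζ_{N-1})^j]`. Expanding `(S_N + ζ_N)^j` binomially and using
independence gives `M_j(N+1) = ∑_i C(j,i) M_i(N) E[ζ^(j-i)]`. The term `i = j` is `M_j(N)` and the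
term `i = j - 1` vanishes because `E ζ = 0`, so the forward difference of `M_j` is a combination of
`M_i` with `i ≤ j - 2`. By strong induction the `(⌊j/2⌋ + 1)`-st forward difference of `M_j`
vanishes, and the Gregory–Newton formula turns such a sequence into a polynomial of degree at most
`⌊j/2⌋`.
-/

open MeasureTheory ProbabilityTheory Polynomial Finset fwdDiff

lemma fwdDiff_iter_eq_zero_of_le {M G : Type*} [AddCommMonoid M] [AddCommGroup G] {h : M}
    {f : M → G} {m n : ℕ} (hf : (Δ_[h])^[m] f = 0) (hmn : m ≤ n) : (Δ_[h])^[n] f = 0 := by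
  obtain ⟨k, rfl⟩ := Nat.exists_eq_add_of_le hmn
  rw [add_comm, Function.iterate_add_apply, hf]
  exact Function.iterate_fixed (fwdDiff_const h 0) k

theorem exists_natDegree_le_of_fwdDiff_iter_eq_zero {K : Type*} [Field K] [CharZero K]
    {f : ℕ → K} {n : ℕ} (hf : (Δ_[1])^[n + 1] f = 0) :
    ∃ P : K[X], P.natDegree ≤ n ∧ ∀ N : ℕ, f N = P.eval (N : K) := by
  refine ⟨∑ k ∈ range (n + 1), C ((Δ_[1])^[k] f 0 / k.factorial) * descPochhammer K k, ?_,
    fun N ↦ ?_⟩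
  · refine natDegree_sum_le_of_forall_le _ _ fun k hk ↦ (natDegree_C_mul_le _ _).trans ?_
    rw [descPochhammer_natDegree]
    exact Nat.lt_succ_iff.mp (mem_range.mp hk)
  set g : ℕ → K := fun k ↦ N.choose k • (Δ_[1])^[k] f 0
  have hg : ∀ k, min N n < k → g k = 0 := by
    intro k hk
    rcases min_lt_iff.mp hk with hN | hn
    · simp [g, Nat.choose_eq_zero_of_lt hN]
    · simp [g, fwdDiff_iter_eq_zero_of_le hf hn]
  have hsum : ∀ m, min N n ≤ m → ∑ k ∈ range (m + 1), g k = ∑ k ∈ range (min N n + 1), g k :=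
    fun m hm ↦ (sum_subset (range_subset_range.2 (by omega)) fun k _ hk ↦
      hg k (by simp at hk; omega)).symm
  calc f N = f (0 + N • 1) := by simp
    _ = ∑ k ∈ range (n + 1), g k := by
      rw [shift_eq_sum_fwdDiff_iter 1 f N 0, hsum N (min_le_left N n), hsum n (min_le_right N n)]
    _ = _ := by
      rw [eval_finsetSum]
      refine sum_congr rfl fun k _ ↦ ?_
      simp only [g, eval_mul, eval_C, nsmul_eq_mul, Nat.cast_choose_eq_descPochhammer_div K]
      ring

section Moments

variable {Ω : Type*} {m0 : MeasurableSpace Ω} {μ : Measure Ω}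

lemma memLp_of_integrable_abs_pow {X : Ω → ℝ} {n : ℕ} (hX : AEStronglyMeasurable X μ)
    (h : Integrable (fun ω ↦ |X ω| ^ n) μ) : MemLp X n μ := by
  rcases eq_or_ne n 0 with rfl | hn
  · simpa using hX
  · rw [← integrable_norm_rpow_iff hX (by simpa) (by simp)]
    simpa [Real.norm_eq_abs] using h

lemma MeasureTheory.MemLp.integrable_pow_of_le [IsFiniteMeasure μ] {X : Ω → ℝ} {n i : ℕ}
    (hX : MemLp X n μ) (hi : i ≤ n) : Integrable (fun ω ↦ X ω ^ i) μ :=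
  (hX.mono_exponent (by exact_mod_cast hi)).integrable_norm_pow'.mono' (hX.1.pow i)
    (ae_of_all _ fun ω ↦ (norm_pow (X ω) i).le)

theorem ProbabilityTheory.IndepFun.integral_add_pow [IsFiniteMeasure μ] {X Y : Ω → ℝ} {n : ℕ}
    (hXY : IndepFun X Y μ) (hX : MemLp X n μ) (hY : MemLp Y n μ) :
    ∫ ω, (X ω + Y ω) ^ n ∂μ =
      ∑ i ∈ range (n + 1), n.choose i * (∫ ω, X ω ^ i ∂μ) * ∫ ω, Y ω ^ (n - i) ∂μ := by
  have hpow : ∀ i, IndepFun (fun ω ↦ X ω ^ i) (fun ω ↦ Y ω ^ (n - i)) μ := fun i ↦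
    hXY.comp (measurable_id.pow_const i) (measurable_id.pow_const (n - i))
  have hX' : ∀ i ∈ range (n + 1), Integrable (fun ω ↦ X ω ^ i) μ := fun i hi ↦
    hX.integrable_pow_of_le (Nat.lt_succ_iff.mp (mem_range.mp hi))
  have hY' : ∀ i, Integrable (fun ω ↦ Y ω ^ (n - i)) μ := fun i ↦
    hY.integrable_pow_of_le (Nat.sub_le n i)
  simp_rw [add_pow]
  rw [integral_finsetSum _ fun i hi ↦ ?_]
  · refine sum_congr rfl fun i hi ↦ ?_
    rw [integral_mul_const, (hpow i).integral_fun_mul_eq_mul_integral (hX' i hi).1 (hY' i).1]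
    ring
  · exact ((hpow i).integrable_mul (hX' i hi) (hY' i)).mul_const _

noncomputable def sumMoment (μ : Measure Ω) (ζ : ℕ → Ω → ℝ) (j N : ℕ) : ℝ :=
  ∫ ω, (∑ k ∈ range N, ζ k ω) ^ j ∂μ

variable {ζ : ℕ → Ω → ℝ} {ℓ : ℕ}

theorem sumMoment_succ [IsFiniteMeasure μ] (hmeas : ∀ k, Measurable (ζ k))
    (hindep : iIndepFun ζ μ) (hident : ∀ k, IdentDistrib (ζ k) (ζ 0) μ μ) (hmom : MemLp (ζ 0) ℓ μ)
    {j : ℕ} (hj : j ≤ ℓ) (N : ℕ) :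
    sumMoment μ ζ j (N + 1) =
      ∑ i ∈ range (j + 1), j.choose i * sumMoment μ ζ i N * ∫ ω, ζ 0 ω ^ (j - i) ∂μ := by
  have hζ : ∀ k, MemLp (ζ k) j μ := fun k ↦
    ((hident k).memLp_iff.2 hmom).mono_exponent (by exact_mod_cast hj)
  have hsum : IndepFun (fun ω ↦ ∑ k ∈ range N, ζ k ω) (ζ N) μ := by
    simpa only [← Finset.sum_apply] using
      hindep.indepFun_finsetSum_of_notMem hmeas notMem_range_self
  simp only [sumMoment]
  simp_rw [sum_range_succ _ N]
  rw [hsum.integral_add_pow (memLp_finsetSum _ fun k _ ↦ hζ k) (hζ N)]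
  refine sum_congr rfl fun i _ ↦ ?_
  congr 1
  exact ((hident N).comp (measurable_id.pow_const (j - i))).integral_eq

theorem fwdDiff_sumMoment_succ [IsProbabilityMeasure μ] (hmeas : ∀ k, Measurable (ζ k))
    (hindep : iIndepFun ζ μ) (hident : ∀ k, IdentDistrib (ζ k) (ζ 0) μ μ)
    (hmean : ∫ ω, ζ 0 ω ∂μ = 0) (hmom : MemLp (ζ 0) ℓ μ) {p : ℕ} (hp : p + 1 ≤ ℓ) :
    Δ_[1] (sumMoment μ ζ (p + 1)) =
      ∑ i ∈ range p, ((p + 1).choose i * ∫ ω, ζ 0 ω ^ (p + 1 - i) ∂μ) • sumMoment μ ζ i := by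
  ext N
  rw [fwdDiff, sumMoment_succ hmeas hindep hident hmom hp, sum_range_succ, sum_range_succ,
    Finset.sum_apply]
  simp [hmean, mul_right_comm]

theorem fwdDiff_iter_sumMoment_eq_zero [IsProbabilityMeasure μ] (hmeas : ∀ k, Measurable (ζ k))
    (hindep : iIndepFun ζ μ) (hident : ∀ k, IdentDistrib (ζ k) (ζ 0) μ μ)
    (hmean : ∫ ω, ζ 0 ω ∂μ = 0) (hmom : MemLp (ζ 0) ℓ μ) {j : ℕ} (hj : j ≤ ℓ) :
    (Δ_[1])^[j / 2 + 1] (sumMoment μ ζ j) = 0 := by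
  induction j using Nat.strong_induction_on with
  | _ j ih =>
  rcases j with _ | p
  · have hconst : sumMoment μ ζ 0 = fun _ ↦ 1 := by ext N; simp [sumMoment]
    rw [hconst]
    exact fwdDiff_const 1 1
  · rw [Function.iterate_succ_apply, fwdDiff_sumMoment_succ hmeas hindep hident hmean hmom hj,
      fwdDiff_iter_finsetSum]
    refine sum_eq_zero fun i hi ↦ ?_
    have hi := mem_range.mp hi
    rw [fwdDiff_iter_const_smul,
      fwdDiff_iter_eq_zero_of_le (ih i (by omega) (by omega)) (by omega), smul_zero]

end Moments

theorem stmt_8 {Ω : Type*} {m0 : MeasurableSpace Ω} (μ : Measure Ω)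
    [IsProbabilityMeasure μ] (ζ : ℕ → Ω → ℝ) (ℓ : ℕ)
    (hmeas : ∀ k, Measurable (ζ k))
    (hindep : iIndepFun ζ μ)
    (hident : ∀ k, IdentDistrib (ζ k) (ζ 0) μ μ)
    (hmean : ∫ ω, ζ 0 ω ∂μ = 0)
    (hmom : Integrable (fun ω => |ζ 0 ω| ^ ℓ) μ) :
    ∃ R : Polynomial ℝ, R.natDegree ≤ ℓ / 2 ∧
      ∀ N : ℕ, ℓ ≤ N →
        ∫ ω, (∑ k ∈ Finset.range N, ζ k ω) ^ ℓ ∂μ = R.eval (N : ℝ) := by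
  have hmemLp := memLp_of_integrable_abs_pow (hmeas 0).aestronglyMeasurable hmom
  obtain ⟨R, hdeg, hR⟩ := exists_natDegree_le_of_fwdDiff_iter_eq_zero
    (fwdDiff_iter_sumMoment_eq_zero hmeas hindep hident hmean hmemLp le_rfl)
  exact ⟨R, hdeg, fun N _ ↦ hR N⟩
end

section
/- Fix n ∈ ℕ and vectors x_0 = 0, x_1, …, x_n ∈ ℝ² with ∑_{k=1}^n ⟨𝟙, x_{k−1}⟩² > 0 and ∑_{k=1}^n ⟨ũ, x_{k−1}⟩² > 0, where 𝟙 = (1,1) and ũ = (1,−1). Fix m ∈ ℝ². Define Q(ρ, δ) := ∑_{k=1}^n ‖ x_k − (1/2)·[[ρ+δ, ρ−δ],[ρ−δ, ρ+δ]]·x_{k−1} − m ‖². Then Q attains its unique global minimum over (ρ,δ) ∈ ℝ² at ρ̂ = (∑_{k=1}^n ⟨𝟙, x_k − m⟩⟨𝟙, x_{k−1}⟩) / (∑_{k=1}^n ⟨𝟙, x_{k−1}⟩²) and δ̂ = (∑_{k=1}^n ⟨ũ, x_k − m⟩⟨ũ, x_{k−1}⟩) / (∑_{k=1}^n ⟨ũ,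 x_{k−1}⟩²). -/
theorem stmt_19 (n : ℕ) (x : ℕ → Fin 2 → ℝ) (hx0 : x 0 = 0) (m : Fin 2 → ℝ)
    (hone : 0 < ∑ k ∈ Finset.Icc 1 n, (x (k - 1) 0 + x (k - 1) 1) ^ 2)
    (hu : 0 < ∑ k ∈ Finset.Icc 1 n, (x (k - 1) 0 - x (k - 1) 1) ^ 2)
    (Q : ℝ → ℝ → ℝ)
    (hQ : ∀ ρ δ, Q ρ δ = ∑ k ∈ Finset.Icc 1 n,
      ((x k 0 - ((ρ + δ)/2 * x (k - 1) 0 + (ρ - δ)/2 * x (k - 1) 1) - m 0) ^ 2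
        + (x k 1 - ((ρ - δ)/2 * x (k - 1) 0 + (ρ + δ)/2 * x (k - 1) 1) - m 1) ^ 2))
    (ρh δh : ℝ)
    (hρh : ρh = (∑ k ∈ Finset.Icc 1 n,
        ((x k 0 - m 0) + (x k 1 - m 1)) * (x (k - 1) 0 + x (k - 1) 1))
      / ∑ k ∈ Finset.Icc 1 n, (x (k - 1) 0 + x (k - 1) 1) ^ 2)
    (hδh : δh = (∑ k ∈ Finset.Icc 1 n,
        ((x k 0 - m 0) - (x k 1 - m 1)) * (x (k - 1) 0 - x (k - 1) 1))
      / ∑ k ∈ Finset.Icc 1 n, (x (k - 1) 0 - x (k - 1) 1) ^ 2) :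
    (∀ ρ δ : ℝ, Q ρh δh ≤ Q ρ δ)
      ∧ ∀ ρ δ : ℝ, (ρ, δ) ≠ (ρh, δh) → Q ρh δh < Q ρ δ := by
  set SA := ∑ k ∈ Finset.Icc 1 n, (x (k - 1) 0 + x (k - 1) 1) ^ 2 with hSA
  set SB := ∑ k ∈ Finset.Icc 1 n, (x (k - 1) 0 - x (k - 1) 1) ^ 2 with hSB
  set PA := ∑ k ∈ Finset.Icc 1 n,
      ((x k 0 - m 0) + (x k 1 - m 1)) * (x (k - 1) 0 + x (k - 1) 1) with hPA
  set PB := ∑ k ∈ Finset.Icc 1 n,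
      ((x k 0 - m 0) - (x k 1 - m 1)) * (x (k - 1) 0 - x (k - 1) 1) with hPB
  have hρSA : ρh * SA = PA := by rw [hρh]; field_simp
  have hδSB : δh * SB = PB := by rw [hδh]; field_simp
  have expand : ∀ ρ δ : ℝ, Q ρ δ =
      (∑ k ∈ Finset.Icc 1 n, ((x k 0 - m 0) ^ 2 + (x k 1 - m 1) ^ 2))
      - ρ * PA - δ * PB + ρ ^ 2 * SA / 2 + δ ^ 2 * SB / 2 := by
    intro ρ δ
    rw [hQ, hPA, hPB, hSA, hSB, Finset.mul_sum, Finset.mul_sum, Finset.mul_sum,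
      Finset.mul_sum, Finset.sum_div, Finset.sum_div,
      ← Finset.sum_sub_distrib, ← Finset.sum_sub_distrib,
      ← Finset.sum_add_distrib, ← Finset.sum_add_distrib]
    exact Finset.sum_congr rfl fun k _ => by ring
  have D : ∀ ρ δ : ℝ, Q ρ δ = Q ρh δh + SA * (ρ - ρh) ^ 2 / 2 + SB * (δ - δh) ^ 2 / 2 := by
    intro ρ δ
    rw [expand ρ δ, expand ρh δh]
    linear_combination (ρ - ρh) * hρSA + (δ - δh) * hδSB
  constructor
  · intro ρ δ
    rw [D ρ δ]
    nlinarith [mul_nonneg hone.le (sq_nonneg (ρ - ρh)), mul_nonneg hu.le (sq_nonneg (δ - δh))]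
  · intro ρ δ hne
    rw [D ρ δ]
    rcases (not_and_or.mp (fun h => hne (Prod.ext h.1 h.2))) with h | h
    · nlinarith [mul_pos hone (pow_pos (abs_pos.mpr (sub_ne_zero.mpr h)) 2),
        sq_abs (ρ - ρh), mul_nonneg hu.le (sq_nonneg (δ - δh))]
    · nlinarith [mul_pos hu (pow_pos (abs_pos.mpr (sub_ne_zero.mpr h)) 2),
        sq_abs (δ - δh), mul_nonneg hone.le (sq_nonneg (ρ - ρh))]
end
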